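/- If the predictions are perfect, i.e., c̃_t = c_t for every t = 1,…,T, then the optimistic expert's regret is non-positive, R^(o) = ∑_{t=1}^T c_t·(y⋆ − y_t^(o)) ≤ 0, and consequently Algorithm XC satisfies R^(xc) ≤ 2w√(2T). -/

import Mathlib

open Finset

/-- Dot product of real vectors indexed by a fintype. -/
def dot {ι : Type*} [Fintype ι] (a b : ι → ℝ) : ℝ := ∑ i, a i * b i

/-- The single-cache feasible set `Y = {y ∈ [0,1]^N : ∑_n y_n ≤ C}`. -/
def FeasibleY (N C : ℕ) (y : Fin N → ℝ) : Prop :=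
  (∀ n, y n ∈ Set.Icc (0 : ℝ) 1) ∧ ∑ n, y n ≤ (C : ℝ)

/-- The 2-dimensional probability simplex `Δ`. -/
def Simplex2 (u : Fin 2 → ℝ) : Prop := 0 ≤ u 0 ∧ 0 ≤ u 1 ∧ u 0 + u 1 = 1

/-!
With perfect predictions the optimistic expert maximises the true utility in every slot, so its
regret is non-positive. The regret of the mixture `y_t` splits as the optimistic expert's regret
plus the regret of the meta-learner against the pure weight `(0, 1)`. The meta-learner is
projected online gradient ascent on the 2-simplex. Centring the utility vector changes neither the
projection onto the simplex nor the regret, and leaves a gradient of squared norm at most `w²/2`;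
the usual telescoping analysis with steps `1/(w√t)` then bounds the meta-regret by
`w√T + (w/4)·2√T = (3/2)w√T ≤ 2w√(2T)`.
-/

section

variable {ι : Type*} [Fintype ι]

lemma sum_sq_sub_le_of_isMinOn {K : Set (ι → ℝ)} (hK : Convex ℝ K) {x p v : ι → ℝ}
    (hp : p ∈ K) (hmin : IsMinOn (fun q => ∑ k, (q k - x k) ^ 2) K p) (hv : v ∈ K) :
    ∑ k, (p k - v k) ^ 2 ≤ ∑ k, (x k - v k) ^ 2 := by
  set A := ∑ k, (x k - p k) * (v k - p k)
  set B := ∑ k, (p k - v k) ^ 2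
  have hB : 0 ≤ B := sum_nonneg fun k _ => sq_nonneg _
  have hsegment : ∀ s ∈ Set.Icc (0 : ℝ) 1, 2 * s * A ≤ s ^ 2 * B := by
    intro s hs
    have h := isMinOn_iff.mp hmin _ (hK.add_smul_sub_mem hp hv hs)
    have expand : ∑ k, ((p + s • (v - p)) k - x k) ^ 2
        = ∑ k, (p k - x k) ^ 2 - 2 * s * A + s ^ 2 * B := by
      simp only [A, B, mul_sum, ← sum_sub_distrib, ← sum_add_distrib]
      refine sum_congr rfl fun k _ => ?_
      simp only [Pi.add_apply, Pi.smul_apply, Pi.sub_apply, smul_eq_mul]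
      ring
    linarith
  -- the obtuse-angle condition `⟪x - p, v - p⟫ ≤ 0` characterising the projection
  have hA : A ≤ 0 := by
    by_contra! hA
    set s := A / (A + B)
    have hs : 0 < s := by positivity
    have h := hsegment s ⟨hs.le, div_le_one_of_le₀ (by linarith) (by positivity)⟩
    have h2 : 2 * A ≤ s * B := by nlinarith
    have h3 : s * B ≤ A := by
      rw [div_mul_eq_mul_div, div_le_iff₀ (by positivity)]
      nlinarith
    linarith
  have expand : ∑ k, (x k - v k) ^ 2 = ∑ k, (x k - p k) ^ 2 - 2 * A + B := by
    simp only [A, B, mul_sum, ← sum_sub_distrib, ← sum_add_distrib]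
    exact sum_congr rfl fun k _ => by ring
  linarith [sum_nonneg fun k (_ : k ∈ univ) => sq_nonneg (x k - p k)]

lemma oga_step_le {K : Set (ι → ℝ)} (hK : Convex ℝ K) {η : ℝ} (hη : 0 < η)
    {u u' g v : ι → ℝ} (hu' : u' ∈ K)
    (hmin : IsMinOn (fun q => ∑ k, (q k - (u k + η * g k)) ^ 2) K u') (hv : v ∈ K) :
    ∑ k, g k * (v k - u k)
      ≤ (∑ k, (u k - v k) ^ 2 - ∑ k, (u' k - v k) ^ 2) / (2 * η) + η / 2 * ∑ k, g k ^ 2 := by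
  have hproj := sum_sq_sub_le_of_isMinOn hK hu' hmin hv
  have expand : ∑ k, (u k + η * g k - v k) ^ 2
      = ∑ k, (u k - v k) ^ 2 - 2 * η * ∑ k, g k * (v k - u k) + η ^ 2 * ∑ k, g k ^ 2 := by
    simp only [mul_sum, ← sum_sub_distrib, ← sum_add_distrib]
    exact sum_congr rfl fun k _ => by ring
  rw [div_add' _ _ _ (by positivity), le_div_iff₀ (by positivity)]
  nlinarith

lemma IsMinOn.sum_sq_sub_add_const {x x' p : ι → ℝ} {c : ℝ} (hx : ∀ k, x' k = x k + c)
    (hp : p ∈ stdSimplex ℝ ι) (hmin : IsMinOn (fun q => ∑ k, (q k - x k) ^ 2) (stdSimplex ℝ ι) p) :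
    IsMinOn (fun q => ∑ k, (q k - x' k) ^ 2) (stdSimplex ℝ ι) p := by
  have shift : ∀ q ∈ stdSimplex ℝ ι, ∑ k, (q k - x' k) ^ 2
      = ∑ k, (q k - x k) ^ 2 + (2 * c * ∑ k, x k + Fintype.card ι * c ^ 2 - 2 * c) := by
    intro q hq
    have expand : ∑ k, (q k - x' k) ^ 2
        = ∑ k, (q k - x k) ^ 2 - 2 * c * ∑ k, q k + 2 * c * ∑ k, x k + ∑ _k : ι, c ^ 2 := by
      simp only [hx, mul_sum, ← sum_sub_distrib, ← sum_add_distrib]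
      exact sum_congr rfl fun k _ => by ring
    rw [expand, hq.2, sum_const, card_univ, nsmul_eq_mul]
    ring
  refine isMinOn_iff.mpr fun q hq => ?_
  rw [shift q hq, shift p hp]
  linarith [isMinOn_iff.mp hmin q hq]

lemma sum_sq_sub_le_two_of_mem_stdSimplex {u v : ι → ℝ} (hu : u ∈ stdSimplex ℝ ι)
    (hv : v ∈ stdSimplex ℝ ι) : ∑ k, (u k - v k) ^ 2 ≤ 2 := by
  calc ∑ k, (u k - v k) ^ 2 ≤ ∑ k, (u k + v k) := sum_le_sum fun k _ => by
        have := mem_Icc_of_mem_stdSimplex hu k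
        have := mem_Icc_of_mem_stdSimplex hv k
        simp only [Set.mem_Icc] at *
        nlinarith
    _ = 2 := by rw [sum_add_distrib, hu.2, hv.2]; norm_num

lemma sum_Icc_mul_sub_succ_le {b d : ℕ → ℝ} {D : ℝ} (hb : MonotoneOn b (Set.Ici 1))
    (hb1 : 0 ≤ b 1) (hd : ∀ t, 1 ≤ t → d t ≤ D) {T : ℕ} (hT : 1 ≤ T) :
    ∑ t ∈ Icc 1 T, b t * (d t - d (t + 1)) ≤ b T * (D - d (T + 1)) := by
  induction T, hT using Nat.le_induction with
  | base => simpa using mul_le_mul_of_nonneg_left (by linarith [hd 1 le_rfl]) hb1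
  | succ T hT ih =>
    rw [sum_Icc_succ_top (by omega)]
    have hbT : b T ≤ b (T + 1) := hb (Set.mem_Ici.2 hT) (Set.mem_Ici.2 (by omega)) (by omega)
    nlinarith [hd (T + 1) (by omega)]

theorem oga_regret_le {K : Set (ι → ℝ)} (hK : Convex ℝ K) {η : ℕ → ℝ}
    (hη : ∀ t, 1 ≤ t → 0 < η t) (hη_anti : AntitoneOn η (Set.Ici 1)) {g u : ℕ → ι → ℝ}
    (hu : ∀ t, 1 ≤ t → u t ∈ K)
    (hstep : ∀ t, 1 ≤ t →
      IsMinOn (fun q => ∑ k, (q k - (u t k + η t * g t k)) ^ 2) K (u (t + 1)))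
    {v : ι → ℝ} (hv : v ∈ K) {D : ℝ} (hD : ∀ t, 1 ≤ t → ∑ k, (u t k - v k) ^ 2 ≤ D)
    {T : ℕ} (hT : 1 ≤ T) :
    ∑ t ∈ Icc 1 T, ∑ k, g t k * (v k - u t k)
      ≤ D / (2 * η T) + ∑ t ∈ Icc 1 T, η t / 2 * ∑ k, g t k ^ 2 := by
  set d : ℕ → ℝ := fun t => ∑ k, (u t k - v k) ^ 2
  have hb : MonotoneOn (fun t => (2 * η t)⁻¹) (Set.Ici 1) := fun s hs t ht hst => by
    have := hη t ht
    simp only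
    gcongr
    exact hη_anti hs ht hst
  have htelescope := sum_Icc_mul_sub_succ_le hb (by have := hη 1 le_rfl; positivity) hD hT
  have hdT : 0 ≤ (2 * η T)⁻¹ * d (T + 1) := by
    have := hη T hT
    positivity
  calc ∑ t ∈ Icc 1 T, ∑ k, g t k * (v k - u t k)
      ≤ ∑ t ∈ Icc 1 T, ((2 * η t)⁻¹ * (d t - d (t + 1)) + η t / 2 * ∑ k, g t k ^ 2) :=
        sum_le_sum fun t ht => by
          have ht1 := (mem_Icc.1 ht).1
          rw [← div_eq_inv_mul]
          exact oga_step_le hK (hη t ht1) (hu (t + 1) (by omega)) (hstep t ht1) hv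
    _ ≤ D / (2 * η T) + ∑ t ∈ Icc 1 T, η t / 2 * ∑ k, g t k ^ 2 := by
        rw [sum_add_distrib, div_eq_inv_mul D]
        linarith

end

lemma sum_Icc_one_div_sqrt_le (T : ℕ) : ∑ t ∈ Icc 1 T, 1 / √(t : ℝ) ≤ 2 * √(T : ℝ) := by
  induction T with
  | zero => simp
  | succ T ih =>
    rw [sum_Icc_succ_top (by omega)]
    have hr : 0 < √((T : ℝ) + 1) := Real.sqrt_pos.2 (by positivity)
    have hsq : √(T : ℝ) ^ 2 = T := Real.sq_sqrt (by positivity)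
    have hsq' : √((T : ℝ) + 1) ^ 2 = T + 1 := Real.sq_sqrt (by positivity)
    have hstep : 1 / √((T : ℝ) + 1) ≤ 2 * √((T : ℝ) + 1) - 2 * √(T : ℝ) := by
      rw [div_le_iff₀ hr]
      nlinarith
    push_cast
    linarith

theorem oga_two_experts_regret_le {w : ℝ} (hw : 0 < w) {l u : ℕ → Fin 2 → ℝ} {T : ℕ}
    (hT : 1 ≤ T) (hl : ∀ t ∈ Icc 1 T, ∀ k, l t k ∈ Set.Icc 0 w)
    (hu : ∀ t, 1 ≤ t → u t ∈ stdSimplex ℝ (Fin 2))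
    (hstep : ∀ t, 1 ≤ t → IsMinOn (fun q => ∑ k, (q k - (u t k + 1 / (w * √(t : ℝ)) * l t k)) ^ 2)
      (stdSimplex ℝ (Fin 2)) (u (t + 1)))
    {v : Fin 2 → ℝ} (hv : v ∈ stdSimplex ℝ (Fin 2)) :
    ∑ t ∈ Icc 1 T, ∑ k, l t k * (v k - u t k) ≤ 3 / 2 * w * √(T : ℝ) := by
  set η : ℕ → ℝ := fun t => 1 / (w * √(t : ℝ))
  set g : ℕ → Fin 2 → ℝ := fun t k => l t k - (l t 0 + l t 1) / 2
  have hη : ∀ t, 1 ≤ t → 0 < η t := fun t ht => by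
    have : (0 : ℝ) < t := by exact_mod_cast ht
    positivity
  have hη_anti : AntitoneOn η (Set.Ici 1) := fun s hs t ht hst => by
    have : (0 : ℝ) < s := by exact_mod_cast hs
    simp only [η]
    gcongr
  have hstep' : ∀ t, 1 ≤ t →
      IsMinOn (fun q => ∑ k, (q k - (u t k + η t * g t k)) ^ 2) (stdSimplex ℝ (Fin 2))
        (u (t + 1)) := fun t ht =>
    (hstep t ht).sum_sq_sub_add_const (c := -(η t * ((l t 0 + l t 1) / 2)))
      (fun k => by ring) (hu (t + 1) (by omega))
  have hcentred : ∀ t, 1 ≤ t → ∑ k, g t k * (v k - u t k) = ∑ k, l t k * (v k - u t k) := by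
    intro t ht
    have hu1 := (hu t ht).2
    have hv1 := hv.2
    simp only [Fin.sum_univ_two, g] at *
    linear_combination (l t 0 + l t 1) / 2 * (hu1 - hv1)
  have hg : ∀ t ∈ Icc 1 T, η t / 2 * ∑ k, g t k ^ 2 ≤ w / 4 * (1 / √(t : ℝ)) := by
    intro t ht
    have ⟨h0, h0'⟩ := hl t ht 0
    have ⟨h1, h1'⟩ := hl t ht 1
    have hst : 0 < √(t : ℝ) := Real.sqrt_pos.2 (by exact_mod_cast (mem_Icc.1 ht).1)
    have hnorm : ∑ k, g t k ^ 2 ≤ w ^ 2 / 2 := by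
      simp only [Fin.sum_univ_two, g]
      nlinarith
    calc η t / 2 * ∑ k, g t k ^ 2 ≤ η t / 2 * (w ^ 2 / 2) := by
          gcongr
      _ = w / 4 * (1 / √(t : ℝ)) := by
          simp only [η]
          field_simp
          norm_num
  have hregret := oga_regret_le (convex_stdSimplex ℝ (Fin 2)) hη hη_anti hu hstep' hv
    (fun t ht => sum_sq_sub_le_two_of_mem_stdSimplex (hu t ht) hv) hT
  calc ∑ t ∈ Icc 1 T, ∑ k, l t k * (v k - u t k)
      = ∑ t ∈ Icc 1 T, ∑ k, g t k * (v k - u t k) :=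
        sum_congr rfl fun t ht => (hcentred t (mem_Icc.1 ht).1).symm
    _ ≤ 2 / (2 * η T) + ∑ t ∈ Icc 1 T, η t / 2 * ∑ k, g t k ^ 2 := hregret
    _ ≤ w * √(T : ℝ) + ∑ t ∈ Icc 1 T, w / 4 * (1 / √(t : ℝ)) := by
        refine add_le_add (le_of_eq ?_) (sum_le_sum hg)
        simp only [η]
        field_simp
    _ ≤ w * √(T : ℝ) + w / 4 * (2 * √(T : ℝ)) := by
        rw [← mul_sum]
        gcongr
        exact sum_Icc_one_div_sqrt_le T
    _ = 3 / 2 * w * √(T : ℝ) := by ring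

lemma simplex2_iff_mem_stdSimplex (u : Fin 2 → ℝ) : Simplex2 u ↔ u ∈ stdSimplex ℝ (Fin 2) := by
  simp [Simplex2, stdSimplex, Fin.forall_fin_two, and_assoc]

lemma dot_sub_right {ι : Type*} [Fintype ι] (c a b : ι → ℝ) :
    dot c (fun n => a n - b n) = dot c a - dot c b := by
  simp only [dot, mul_sub, sum_sub_distrib]

lemma dot_single_mem_Icc {N C : ℕ} {i : Fin N} {a w : ℝ} (ha : a ∈ Set.Icc 0 w)
    {z : Fin N → ℝ} (hz : FeasibleY N C z) :
    dot (fun n => if n = i then a else 0) z ∈ Set.Icc 0 w := by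
  have ⟨hz0, hz1⟩ := hz.1 i
  simp only [dot, ite_mul, zero_mul, sum_ite_eq', mem_univ, if_true]
  exact ⟨mul_nonneg ha.1 hz0, (mul_le_of_le_one_right ha.1 hz1).trans ha.2⟩

lemma dot_sub_mixture_eq {ι : Type*} [Fintype ι] (c z a b : ι → ℝ) (u : Fin 2 → ℝ) :
    dot c (fun n => z n - (u 0 * a n + u 1 * b n))
      = dot c (fun n => z n - b n) + ∑ k, ![dot c a, dot c b] k * (![0, 1] k - u k) := by
  have hmix : dot c (fun n => u 0 * a n + u 1 * b n) = u 0 * dot c a + u 1 * dot c b := by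
    simp only [dot, mul_sum, ← sum_add_distrib]
    exact sum_congr rfl fun _ _ => by ring
  rw [dot_sub_right, dot_sub_right, hmix]
  simp only [Fin.sum_univ_two, Matrix.cons_val_zero, Matrix.cons_val_one]
  ring

theorem xc_perfect_predictions_general
    (N C T : ℕ) (hT : 1 ≤ T)
    (w : ℝ) (hw : 0 < w)
    (wt : ℕ → ℝ) (hwt : ∀ t, wt t ∈ Set.Icc 0 w) (nt : ℕ → Fin N)
    -- utility gradients `c_t = w_t e_{n_t}`
    (c : ℕ → Fin N → ℝ) (hc : ∀ t, c t = fun n => if n = nt t then wt t else 0)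
    -- predictions
    (ctil : ℕ → Fin N → ℝ)
    -- pessimistic expert: FTRL with zero predictions
    (σt : ℕ → ℝ)
    (yp : ℕ → Fin N → ℝ)
    (hyp1 : FeasibleY N C (yp 1))
    (hpstep : ∀ t, 1 ≤ t →
      FeasibleY N C (yp (t + 1)) ∧
      ∀ y', FeasibleY N C y' →
        (∑ τ ∈ Finset.Icc 1 t, σt τ / 2 * ∑ n, (yp (t + 1) n - yp τ n) ^ 2)
            - dot (fun n => ∑ τ ∈ Finset.Icc 1 t, c τ n) (yp (t + 1))
          ≤ (∑ τ ∈ Finset.Icc 1 t, σt τ / 2 * ∑ n, (y' n - yp τ n) ^ 2)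
            - dot (fun n => ∑ τ ∈ Finset.Icc 1 t, c τ n) y')
    -- optimistic expert: plays a maximizer of the predicted utility
    (yo : ℕ → Fin N → ℝ)
    -- experts' utility vectors `l_t = (c_t·y_t^{(p)}, c_t·y_t^{(o)})`
    (l : ℕ → Fin 2 → ℝ) (hl : ∀ t, l t = ![dot (c t) (yp t), dot (c t) (yo t)])
    -- meta-learner: online gradient ascent on the simplex
    (u : ℕ → Fin 2 → ℝ) (hu1 : Simplex2 (u 1))
    (hustep : ∀ t, 1 ≤ t →
      Simplex2 (u (t + 1)) ∧
      ∀ v, Simplex2 v →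
        ∑ k, (u (t + 1) k - (u t k + 1 / (w * Real.sqrt (t : ℝ)) * l t k)) ^ 2
          ≤ ∑ k, (v k - (u t k + 1 / (w * Real.sqrt (t : ℝ)) * l t k)) ^ 2)
    -- combined caching decisions
    (y : ℕ → Fin N → ℝ)
    (hy : ∀ t, y t = fun n => u t 0 * yp t n + u t 1 * yo t n)
    -- best static configuration in hindsight
    (ystar : Fin N → ℝ) (hystar : FeasibleY N C ystar)
    -- optimistic expert plays a maximizer of the predicted utility in every slot
    (hostep : ∀ t, 1 ≤ t → t ≤ T →
      FeasibleY N C (yo t) ∧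
      ∀ y', FeasibleY N C y' → dot (ctil t) y' ≤ dot (ctil t) (yo t))
    -- the predictions are perfect
    (hperfect : ∀ t, 1 ≤ t → t ≤ T → ctil t = c t) :
    (∑ t ∈ Finset.Icc 1 T, dot (c t) (fun n => ystar n - yo t n) ≤ 0) ∧
    (∑ t ∈ Finset.Icc 1 T, dot (c t) (fun n => ystar n - y t n)
        ≤ 2 * w * Real.sqrt (2 * (T : ℝ))) := by
  have hyp : ∀ t, 1 ≤ t → FeasibleY N C (yp t) := fun t ht =>
    Nat.le_induction hyp1 (fun t ht _ => (hpstep t ht).1) t ht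
  have hu : ∀ t, 1 ≤ t → u t ∈ stdSimplex ℝ (Fin 2) := fun t ht =>
    (simplex2_iff_mem_stdSimplex _).1 (Nat.le_induction hu1 (fun t ht _ => (hustep t ht).1) t ht)
  have hopt : ∀ t ∈ Icc 1 T, dot (c t) (fun n => ystar n - yo t n) ≤ 0 := fun t ht => by
    obtain ⟨ht1, htT⟩ := mem_Icc.1 ht
    have hmax := (hostep t ht1 htT).2 ystar hystar
    rw [hperfect t ht1 htT] at hmax
    rw [dot_sub_right]
    linarith
  have hl_mem : ∀ t ∈ Icc 1 T, ∀ k, l t k ∈ Set.Icc 0 w := fun t ht k => by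
    obtain ⟨ht1, htT⟩ := mem_Icc.1 ht
    rw [hl t, hc t]
    fin_cases k
    · exact dot_single_mem_Icc (hwt t) (hyp t ht1)
    · exact dot_single_mem_Icc (hwt t) (hostep t ht1 htT).1
  have hmeta := oga_two_experts_regret_le hw hT hl_mem hu
    (fun t ht => isMinOn_iff.mpr fun v hv =>
      (hustep t ht).2 v ((simplex2_iff_mem_stdSimplex v).2 hv))
    (v := ![0, 1]) ((simplex2_iff_mem_stdSimplex _).1 (by norm_num [Simplex2]))
  refine ⟨sum_nonpos hopt, ?_⟩
  calc ∑ t ∈ Icc 1 T, dot (c t) (fun n => ystar n - y t n)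
      = ∑ t ∈ Icc 1 T, dot (c t) (fun n => ystar n - yo t n)
        + ∑ t ∈ Icc 1 T, ∑ k, l t k * (![0, 1] k - u t k) := by
        rw [← sum_add_distrib]
        exact sum_congr rfl fun t _ => by rw [hy t, hl t]; exact dot_sub_mixture_eq _ _ _ _ _
    _ ≤ 0 + 3 / 2 * w * √(T : ℝ) := add_le_add (sum_nonpos hopt) hmeta
    _ ≤ 2 * w * √(2 * (T : ℝ)) := by
        have : √(T : ℝ) ≤ √(2 * (T : ℝ)) := Real.sqrt_le_sqrt (by linarith [T.cast_nonneg (α := ℝ)])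
        nlinarith [Real.sqrt_nonneg (T : ℝ)]

/-- **Perfect predictions for XC.** If `c̃_t = c_t` for every `t = 1, …, T`, the
optimistic expert's regret is non-positive, `R^{(o)} ≤ 0`, and consequently
Algorithm XC satisfies `R^{(xc)} ≤ 2w√(2T)`. -/
theorem xc_perfect_predictions
    (N C T : ℕ) (hN : 1 ≤ N) (hC : 1 ≤ C) (hCN : C < N) (hT : 1 ≤ T)
    (w : ℝ) (hw : 0 < w)
    (wt : ℕ → ℝ) (hwt : ∀ t, wt t ∈ Set.Icc 0 w) (nt : ℕ → Fin N)
    -- utility gradients `c_t = w_t e_{n_t}`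
    (c : ℕ → Fin N → ℝ) (hc : ∀ t, c t = fun n => if n = nt t then wt t else 0)
    -- predictions
    (ctil : ℕ → Fin N → ℝ)
    -- pessimistic expert: FTRL with zero predictions
    (G : ℕ → ℝ) (hG : ∀ t, G t = ∑ τ ∈ Finset.Icc 1 t, ∑ n, (c τ n) ^ 2)
    (σ : ℝ) (hσ : σ = 2 / Real.sqrt (2 * (C : ℝ)))
    (σt : ℕ → ℝ) (hσt : ∀ t, σt t = σ * (Real.sqrt (G t) - Real.sqrt (G (t - 1))))
    (yp : ℕ → Fin N → ℝ)
    (hyp1 : FeasibleY N C (yp 1))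
    (hpstep : ∀ t, 1 ≤ t →
      FeasibleY N C (yp (t + 1)) ∧
      ∀ y', FeasibleY N C y' →
        (∑ τ ∈ Finset.Icc 1 t, σt τ / 2 * ∑ n, (yp (t + 1) n - yp τ n) ^ 2)
            - dot (fun n => ∑ τ ∈ Finset.Icc 1 t, c τ n) (yp (t + 1))
          ≤ (∑ τ ∈ Finset.Icc 1 t, σt τ / 2 * ∑ n, (y' n - yp τ n) ^ 2)
            - dot (fun n => ∑ τ ∈ Finset.Icc 1 t, c τ n) y')
    -- optimistic expert: plays a maximizer of the predicted utility
    (yo : ℕ → Fin N → ℝ)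
    -- experts' utility vectors `l_t = (c_t·y_t^{(p)}, c_t·y_t^{(o)})`
    (l : ℕ → Fin 2 → ℝ) (hl : ∀ t, l t = ![dot (c t) (yp t), dot (c t) (yo t)])
    -- meta-learner: online gradient ascent on the simplex
    (u : ℕ → Fin 2 → ℝ) (hu1 : Simplex2 (u 1))
    (hustep : ∀ t, 1 ≤ t →
      Simplex2 (u (t + 1)) ∧
      ∀ v, Simplex2 v →
        ∑ k, (u (t + 1) k - (u t k + 1 / (w * Real.sqrt (t : ℝ)) * l t k)) ^ 2
          ≤ ∑ k, (v k - (u t k + 1 / (w * Real.sqrt (t : ℝ)) * l t k)) ^ 2)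
    -- combined caching decisions
    (y : ℕ → Fin N → ℝ)
    (hy : ∀ t, y t = fun n => u t 0 * yp t n + u t 1 * yo t n)
    -- best static configuration in hindsight
    (ystar : Fin N → ℝ) (hystar : FeasibleY N C ystar)
    (hystarmax : ∀ y', FeasibleY N C y' →
      ∑ t ∈ Finset.Icc 1 T, dot (c t) y' ≤ ∑ t ∈ Finset.Icc 1 T, dot (c t) ystar)
    -- optimistic expert plays a maximizer of the predicted utility in every slot
    (hostep : ∀ t, 1 ≤ t → t ≤ T →
      FeasibleY N C (yo t) ∧
      ∀ y', FeasibleY N C y' → dot (ctil t) y' ≤ dot (ctil t) (yo t))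
    -- the predictions are perfect
    (hperfect : ∀ t, 1 ≤ t → t ≤ T → ctil t = c t) :
    (∑ t ∈ Finset.Icc 1 T, dot (c t) (fun n => ystar n - yo t n) ≤ 0) ∧
    (∑ t ∈ Finset.Icc 1 T, dot (c t) (fun n => ystar n - y t n)
        ≤ 2 * w * Real.sqrt (2 * (T : ℝ))) :=
  xc_perfect_predictions_general N C T hT w hw wt hwt nt c hc ctil σt yp hyp1 hpstep yo l hl u hu1
    hustep y hy ystar hystar hostep hperfect
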